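/- arXiv:2210.00257 — 3 statements merged into one kernel-verified Lean document; each statement's English description precedes it below -/
import Mathlib

section
/- Let f, g be nonconstant (ρ,σ)-homogeneous polynomials in K[X,Y] of degrees v and u respectively, where (ρ,σ) ∈ ℤ² \ {(0,0)}. Then v, u are integers, and {f,g} = 0 if and only if f^u = λ g^v for some nonzero λ ∈ K. -/
/-
Euler's identity `ρ X f_X + σ Y f_Y = v f` (and likewise for `g` with `u`) turns the bracket into
`ρ X {f,g} = v f g_Y - u g f_Y` and `σ Y {f,g} = u g f_X - v f g_X`. As `(ρ,σ) ≠ (0,0)`, the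
bracket vanishes iff `u g ∂f = v f ∂g` for both partial derivatives, i.e. iff the logarithmic
derivatives of `f^u` and `g^v` agree. Splitting `u = a - a'`, `v = b - b'` into natural numbers,
this says that `P = f^a g^b'` and `Q = f^a' g^b` satisfy `P' Q = P Q'`. Writing `P = d p`,
`Q = d q` with `p, q` coprime (`K[X,Y]` is a UFD), `p ∣ p'` and `q ∣ q'`, which by degree forces
`p' = q' = 0`; in characteristic zero `p` and `q` are then constants, so `P = λ Q`.
-/

open MvPolynomial

/-- The Poisson product on `K[X,Y]`: `{f,g} = f_X g_Y - f_Y g_X`. -/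
noncomputable def poissonBracket {K : Type*} [CommRing K]
    (f g : MvPolynomial (Fin 2) K) : MvPolynomial (Fin 2) K :=
  pderiv 0 f * pderiv 1 g - pderiv 1 f * pderiv 0 g

/-- `f` is `(ρ,σ)`-homogeneous of (integer) degree `τ` for `(ρ,σ) ∈ ℤ²`: every monomial
`X^i Y^j` occurring in `f` satisfies `ρ i + σ j = τ`. -/
def IsZHomogeneous {K : Type*} [CommRing K] (ρ σ : ℤ) (τ : ℤ)
    (f : MvPolynomial (Fin 2) K) : Prop :=
  ∀ m ∈ f.support, ρ * (m 0 : ℤ) + σ * (m 1 : ℤ) = τ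

theorem zpow_eq_mul_zpow_iff {F : Type*} [Field F] {x y : F} (hx : x ≠ 0) (hy : y ≠ 0) (c : F)
    (u v : ℤ) : x ^ u = c * y ^ v ↔
      x ^ u.toNat * y ^ (-v).toNat = c * (x ^ (-u).toNat * y ^ v.toNat) := by
  rw [← Int.toNat_sub_toNat_neg u, ← Int.toNat_sub_toNat_neg v, zpow_sub₀ hx, zpow_sub₀ hy]
  simp only [zpow_natCast, Int.toNat_sub_toNat_neg]
  field_simp

namespace MvPolynomial

variable {R ι : Type*}

section Euler
variable [CommRing R] [Fintype ι] {φ : MvPolynomial ι R}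

theorem IsWeightedHomogeneous.sum_weight_zsmul_X_mul_pderiv {w : ι → ℤ} {n : ℤ}
    (h : φ.IsWeightedHomogeneous w n) : ∑ i : ι, w i • (X i * pderiv i φ) = n • φ := by
  conv_lhs => rw [φ.as_sum]
  conv_rhs => rw [φ.as_sum]
  simp only [map_sum, Finset.mul_sum, X_mul_pderiv_monomial, Finset.smul_sum]
  rw [Finset.sum_comm]
  refine Finset.sum_congr rfl fun m hm => ?_
  rw [← h (mem_support_iff.mp hm), Finsupp.weight_apply, Finsupp.sum_fintype _ _ (by simp),
    Finset.sum_smul]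
  refine Finset.sum_congr rfl fun i _ => ?_
  rw [smul_comm, smul_assoc]

end Euler

section CommSemiring
variable [CommSemiring R] {p : MvPolynomial ι R} {i : ι}

theorem degreeOf_pderiv_lt (h : pderiv i p ≠ 0) : degreeOf i (pderiv i p) < degreeOf i p := by
  have succ_le : ∀ m ∈ (pderiv i p).support, m i + 1 ≤ degreeOf i p := fun m hm => by
    have hm' : m + Finsupp.single i 1 ∈ p.support := by
      rw [mem_support_iff, coeff_pderiv] at hm
      exact mem_support_iff.mpr (left_ne_zero_of_mul hm)
    simpa using monomial_le_degreeOf i hm'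
  obtain ⟨m, hm⟩ := support_nonempty.mpr h
  rw [degreeOf_lt_iff (Nat.lt_of_lt_of_le (Nat.succ_pos _) (succ_le m hm))]
  exact fun m hm => Nat.lt_of_succ_le (succ_le m hm)

end CommSemiring

section CommRing
variable [CommRing R] [IsDomain R] {p : MvPolynomial ι R}

theorem degreeOf_le_of_dvd {q : MvPolynomial ι R} (i : ι) (h : p ∣ q) (hq : q ≠ 0) :
    degreeOf i p ≤ degreeOf i q := by
  obtain ⟨r, rfl⟩ := h
  rw [degreeOf_mul_eq (left_ne_zero_of_mul hq) (right_ne_zero_of_mul hq)]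
  exact Nat.le_add_right _ _

theorem pderiv_eq_zero_of_dvd_pderiv {i : ι} (h : p ∣ pderiv i p) : pderiv i p = 0 := by
  by_contra hne
  exact (degreeOf_le_of_dvd i h hne).not_gt (degreeOf_pderiv_lt hne)

theorem eq_C_of_forall_pderiv_eq_zero [CharZero R] (h : ∀ i, pderiv i p = 0) :
    p = C (coeff 0 p) := by
  ext m
  classical
  rw [coeff_C]
  split_ifs with hm
  · rw [hm]
  obtain ⟨i, hi⟩ : ∃ i, m i ≠ 0 := by
    by_contra! hc
    exact hm (Finsupp.ext hc).symm
  have hcoeff := coeff_pderiv (i := i) p (m - Finsupp.single i 1)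
  rw [h i, coeff_zero, Finsupp.sub_add_single_one_cancel hi] at hcoeff
  exact (mul_eq_zero.mp hcoeff.symm).resolve_right (by norm_cast)

end CommRing

section Field
variable {K : Type*} [Field K] [CharZero K] {p q : MvPolynomial ι K}

theorem exists_eq_C_mul_of_pderiv_mul_eq (hp : p ≠ 0) (hq : q ≠ 0)
    (h : ∀ i, pderiv i p * q = p * pderiv i q) : ∃ c, c ≠ 0 ∧ p = C c * q := by
  obtain ⟨p₁, q₁, d, hcop, rfl, rfl⟩ :=
    UniqueFactorizationMonoid.exists_reduced_factors p hp q
  have hd : d ≠ 0 := left_ne_zero_of_mul hp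
  have h₁ : ∀ i, pderiv i p₁ * q₁ = p₁ * pderiv i q₁ := fun i => by
    have hi := h i
    simp only [pderiv_mul] at hi
    refine mul_left_cancel₀ hd (mul_left_cancel₀ hd ?_)
    linear_combination hi
  have hp₁ : ∀ i, pderiv i p₁ = 0 := fun i =>
    pderiv_eq_zero_of_dvd_pderiv (hcop.dvd_of_dvd_mul_right ⟨pderiv i q₁, h₁ i⟩)
  have hq₁ : ∀ i, pderiv i q₁ = 0 := fun i =>
    pderiv_eq_zero_of_dvd_pderiv
      (hcop.symm.dvd_of_dvd_mul_left ⟨pderiv i p₁, by rw [← h₁ i]; ring⟩)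
  rw [eq_C_of_forall_pderiv_eq_zero hp₁] at hp ⊢
  rw [eq_C_of_forall_pderiv_eq_zero hq₁] at hq ⊢
  have hc₁ : coeff 0 p₁ ≠ 0 := fun h0 => by simp [h0] at hp
  have hc₂ : coeff 0 q₁ ≠ 0 := fun h0 => by simp [h0] at hq
  refine ⟨coeff 0 p₁ / coeff 0 q₁, div_ne_zero hc₁ hc₂, ?_⟩
  rw [mul_left_comm, ← C_mul, div_mul_cancel₀ _ hc₂]

theorem forall_pderiv_mul_eq_iff (hp : p ≠ 0) (hq : q ≠ 0) :
    (∀ i, pderiv i p * q = p * pderiv i q) ↔ ∃ c, c ≠ 0 ∧ p = C c * q := by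
  refine ⟨exists_eq_C_mul_of_pderiv_mul_eq hp hq, ?_⟩
  rintro ⟨c, -, rfl⟩ i
  rw [pderiv_C_mul]
  ring

end Field

section Pow
variable [CommRing R]

theorem mul_pderiv_pow (x : MvPolynomial ι R) (n : ℕ) (i : ι) :
    x * pderiv i (x ^ n) = n * x ^ n * pderiv i x := by
  cases n with
  | zero => simp
  | succ k =>
    rw [pderiv_pow, Nat.add_sub_cancel, pow_succ]
    ring

theorem mul_mul_sub_pderiv_pow_mul_pow (f g : MvPolynomial ι R) (a a' b b' : ℕ) (i : ι) :
    f * g * (pderiv i (f ^ a * g ^ b') * (f ^ a' * g ^ b)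
        - f ^ a * g ^ b' * pderiv i (f ^ a' * g ^ b)) =
      f ^ (a + a') * g ^ (b + b') *
        (((a : ℤ) - a') • (g * pderiv i f) - ((b : ℤ) - b') • (f * pderiv i g)) := by
  rw [pderiv_mul, pderiv_mul, sub_smul, sub_smul, natCast_zsmul, natCast_zsmul, natCast_zsmul,
    natCast_zsmul]
  linear_combination (f ^ a' * g ^ b * g ^ b' * g) * mul_pderiv_pow f a i
    + (f ^ a * f ^ a' * f * g ^ b) * mul_pderiv_pow g b' i
    - (f ^ a * g ^ b * g ^ b' * g) * mul_pderiv_pow f a' i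
    - (f ^ a * f ^ a' * f * g ^ b') * mul_pderiv_pow g b i

end Pow

section FractionRing
variable {K F : Type*} [Field K] [CharZero K] [Field F] [Algebra (MvPolynomial ι K) F]
  [IsFractionRing (MvPolynomial ι K) F]

theorem forall_smul_mul_pderiv_eq_iff_exists_zpow_eq {f g : MvPolynomial ι K} (hf : f ≠ 0)
    (hg : g ≠ 0) (u v : ℤ) : (∀ i, u • (g * pderiv i f) = v • (f * pderiv i g)) ↔
      ∃ c, c ≠ 0 ∧ algebraMap (MvPolynomial ι K) F f ^ u =
        algebraMap (MvPolynomial ι K) F (C c) * algebraMap (MvPolynomial ι K) F g ^ v := by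
  have hP : f ^ u.toNat * g ^ (-v).toNat ≠ 0 := mul_ne_zero (pow_ne_zero _ hf) (pow_ne_zero _ hg)
  have hQ : f ^ (-u).toNat * g ^ v.toNat ≠ 0 := mul_ne_zero (pow_ne_zero _ hf) (pow_ne_zero _ hg)
  have hφ := IsFractionRing.injective (MvPolynomial ι K) F
  calc (∀ i, u • (g * pderiv i f) = v • (f * pderiv i g))
      ↔ ∀ i, pderiv i (f ^ u.toNat * g ^ (-v).toNat) * (f ^ (-u).toNat * g ^ v.toNat) =
          f ^ u.toNat * g ^ (-v).toNat * pderiv i (f ^ (-u).toNat * g ^ v.toNat) := by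
        refine forall_congr' fun i => ?_
        have key := mul_mul_sub_pderiv_pow_mul_pow f g u.toNat (-u).toNat v.toNat (-v).toNat i
        rw [Int.toNat_sub_toNat_neg, Int.toNat_sub_toNat_neg] at key
        rw [← sub_eq_zero, ← sub_eq_zero (a := pderiv i _ * _),
          ← mul_eq_zero_iff_left (mul_ne_zero (pow_ne_zero _ hf) (pow_ne_zero _ hg)), ← key,
          mul_eq_zero_iff_left (mul_ne_zero hf hg)]
    _ ↔ ∃ c, c ≠ 0 ∧ f ^ u.toNat * g ^ (-v).toNat = C c * (f ^ (-u).toNat * g ^ v.toNat) :=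
        forall_pderiv_mul_eq_iff hP hQ
    _ ↔ _ := by
        refine exists_congr fun c => and_congr_right fun _ => ?_
        rw [zpow_eq_mul_zpow_iff ((map_ne_zero_iff _ hφ).mpr hf) ((map_ne_zero_iff _ hφ).mpr hg),
          ← hφ.eq_iff]
        simp only [map_mul, map_pow]

end FractionRing

end MvPolynomial

section Poisson
variable {R : Type*} [CommRing R] {ρ σ τ u v : ℤ} {f g : MvPolynomial (Fin 2) R}

theorem isZHomogeneous_iff_isWeightedHomogeneous :
    IsZHomogeneous ρ σ τ f ↔ f.IsWeightedHomogeneous ![ρ, σ] τ := by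
  have weight_eq (m : Fin 2 →₀ ℕ) : Finsupp.weight ![ρ, σ] m = ρ * m 0 + σ * m 1 := by
    simp [Finsupp.weight_apply, Finsupp.sum_fintype, Fin.sum_univ_two, mul_comm]
  simp only [IsZHomogeneous, IsWeightedHomogeneous, mem_support_iff, weight_eq]

theorem IsZHomogeneous.euler_identity (h : IsZHomogeneous ρ σ τ f) :
    ρ • (X 0 * pderiv 0 f) + σ • (X 1 * pderiv 1 f) = τ • f := by
  simpa [Fin.sum_univ_two] using
    (isZHomogeneous_iff_isWeightedHomogeneous.mp h).sum_weight_zsmul_X_mul_pderiv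

theorem IsZHomogeneous.X_zero_mul_poissonBracket (hf : IsZHomogeneous ρ σ v f)
    (hg : IsZHomogeneous ρ σ u g) :
    ρ • (X 0 * poissonBracket f g) = v • (f * pderiv 1 g) - u • (g * pderiv 1 f) := by
  unfold poissonBracket
  linear_combination pderiv 1 g * hf.euler_identity - pderiv 1 f * hg.euler_identity

theorem IsZHomogeneous.X_one_mul_poissonBracket (hf : IsZHomogeneous ρ σ v f)
    (hg : IsZHomogeneous ρ σ u g) :
    σ • (X 1 * poissonBracket f g) = u • (g * pderiv 0 f) - v • (f * pderiv 0 g) := by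
  unfold poissonBracket
  linear_combination pderiv 0 f * hg.euler_identity - pderiv 0 g * hf.euler_identity

theorem poissonBracket_eq_zero_iff_forall_smul_mul_pderiv_eq [IsDomain R] [CharZero R]
    (hρσ : (ρ, σ) ≠ (0, 0)) (hf : IsZHomogeneous ρ σ v f) (hg : IsZHomogeneous ρ σ u g) :
    poissonBracket f g = 0 ↔ ∀ i, u • (g * pderiv i f) = v • (f * pderiv i g) := by
  have h₀ := hf.X_zero_mul_poissonBracket hg
  have h₁ := hf.X_one_mul_poissonBracket hg
  rw [Fin.forall_fin_two]
  constructor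
  · intro h
    constructor
    · linear_combination σ • X 1 * h - h₁
    · linear_combination h₀ - ρ • X 0 * h
  · rintro ⟨h0, h1⟩
    rw [h1, sub_self, smul_eq_zero, mul_eq_zero] at h₀
    rw [h0, sub_self, smul_eq_zero, mul_eq_zero] at h₁
    obtain hρ | hσ : ρ ≠ 0 ∨ σ ≠ 0 := by
      rw [Ne, Prod.mk.injEq, not_and_or] at hρσ
      exact hρσ
    · exact (h₀.resolve_left hρ).resolve_left (X_ne_zero 0)
    · exact (h₁.resolve_left hσ).resolve_left (X_ne_zero 1)

end Poisson

/-- Let `f, g` be nonconstant `(ρ,σ)`-homogeneous polynomials of (necessarily integer)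
degrees `v` and `u`, with `(ρ,σ) ∈ ℤ² \ {(0,0)}`. Then `{f,g} = 0` iff `f^u = λ g^v` for
some nonzero `λ ∈ K` (the powers with possibly negative integer exponents being taken in
the fraction field of `K[X,Y]`). -/
theorem poissonBracket_eq_zero_iff_power_relation {K : Type*} [Field K] [CharZero K]
    (ρ σ v u : ℤ) (hρσ : (ρ, σ) ≠ (0, 0))
    (f g : MvPolynomial (Fin 2) K)
    (hfc : ∀ c : K, f ≠ C c) (hgc : ∀ c : K, g ≠ C c)
    (hf : IsZHomogeneous ρ σ v f) (hg : IsZHomogeneous ρ σ u g) :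
    poissonBracket f g = 0 ↔
      ∃ lam : K, lam ≠ 0 ∧
        (algebraMap (MvPolynomial (Fin 2) K) (FractionRing (MvPolynomial (Fin 2) K)) f) ^ u =
          algebraMap (MvPolynomial (Fin 2) K) (FractionRing (MvPolynomial (Fin 2) K)) (C lam) *
            (algebraMap (MvPolynomial (Fin 2) K) (FractionRing (MvPolynomial (Fin 2) K)) g) ^ v := by
  have hf₀ : f ≠ 0 := fun h => hfc 0 (by rw [h, map_zero])
  have hg₀ : g ≠ 0 := fun h => hgc 0 (by rw [h, map_zero])
  rw [poissonBracket_eq_zero_iff_forall_smul_mul_pderiv_eq hρσ hf hg,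
    forall_smul_mul_pderiv_eq_iff_exists_zpow_eq (F := FractionRing (MvPolynomial (Fin 2) K))
      hf₀ hg₀]
end

section
/- Let f = F(X)·Y and g = H(X) be polynomials in K[X,Y] with F, H ∈ K[X], satisfying {f,g} = 1. Then F is a nonzero constant α, and g = -α^{-1}X + r for some r ∈ K. -/
/-!
The bracket `{F(X)·Y, H(X)}` is the image of `-F·H'` under the embedding `K[X] → K[X,Y]`, which
is injective, so `F·H' = -1` in `K[X]`. Hence `F` is a unit, i.e. a nonzero constant `α`, and
`H' = -α⁻¹`, which in characteristic `0` pins down `H` up to its constant term.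
-/

open MvPolynomial

theorem poissonBracket_aeval_mul_X_one_aeval {K : Type*} [CommRing K] (F H : Polynomial K) :
    poissonBracket (Polynomial.aeval (X 0 : MvPolynomial (Fin 2) K) F * X 1)
      (Polynomial.aeval (X 0 : MvPolynomial (Fin 2) K) H) =
      -Polynomial.aeval (X 0 : MvPolynomial (Fin 2) K) (F * Polynomial.derivative H) := by
  simp [poissonBracket, pderiv_X]

theorem Polynomial.eq_C_mul_X_add_C_of_derivative_eq_C {R : Type*} [Ring R]
    [IsAddTorsionFree R] {H : Polynomial R} {c : R} (h : derivative H = C c) :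
    H = C c * X + C (H.coeff 0) := by
  have hder : derivative (H - C c * X) = 0 := by simp [h]
  simpa [sub_eq_iff_eq_add'] using eq_C_of_derivative_eq_zero hder

/-- If `f = F(X)·Y`, `g = H(X)` with `{f,g} = 1`, then `F` is a nonzero constant `α`
and `H = -α⁻¹ X + r` for some `r ∈ K`. -/
theorem bracket_one_FY_HX {K : Type*} [Field K] [CharZero K]
    (F H : Polynomial K)
    (hbr : poissonBracket (Polynomial.aeval (X 0 : MvPolynomial (Fin 2) K) F * X 1)
        (Polynomial.aeval (X 0 : MvPolynomial (Fin 2) K) H) = 1) :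
    ∃ α : K, α ≠ 0 ∧ F = Polynomial.C α ∧
      ∃ r : K, H = Polynomial.C (-α⁻¹) * Polynomial.X + Polynomial.C r := by
  have hFH : F * Polynomial.derivative H = -1 := by
    apply (transcendental_iff_injective.mp (transcendental_X K (0 : Fin 2)))
    rw [map_neg, map_one, ← neg_eq_iff_eq_neg, ← poissonBracket_aeval_mul_X_one_aeval, hbr]
  obtain ⟨α, hα, rfl⟩ := Polynomial.isUnit_iff.mp
    (IsUnit.of_mul_eq_one (-Polynomial.derivative H) (by rw [mul_neg, hFH, neg_neg]))
  have hα0 : α ≠ 0 := hα.ne_zero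
  have hder : Polynomial.derivative H = Polynomial.C (-α⁻¹) := by
    calc Polynomial.derivative H
        = Polynomial.C α⁻¹ * (Polynomial.C α * Polynomial.derivative H) := by
          rw [← mul_assoc, ← Polynomial.C_mul, inv_mul_cancel₀ hα0, Polynomial.C_1, one_mul]
      _ = Polynomial.C (-α⁻¹) := by rw [hFH]; simp
  exact ⟨α, hα0, rfl, H.coeff 0, Polynomial.eq_C_mul_X_add_C_of_derivative_eq_C hder⟩
end

section
/- Let f ∈ K[X,Y] be a polynomial with exactly two nonzero terms (|E(f)| = 2, where E(f) is the set of exponent pairs with nonzero coefficient). Then f is not of the form λ h^m with λ ∈ K^*, h ∈ K[X,Y], and m ≥ 2. -/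
open MvPolynomial

namespace Polynomial

lemma aux_X_mul_derivative {K : Type*} [Field K] (c : K) (n : ℕ) :
    (X : K[X]) * derivative (C c * X ^ n) = C (c * n) * X ^ n := by
  cases n with
  | zero => simp
  | succ k =>
      rw [derivative_C_mul_X_pow]
      simp only [Nat.add_sub_cancel]
      ring

lemma aux_key {K : Type*} [Field K] [CharZero K] (a b lam : K) (ha : a ≠ 0) (hb : b ≠ 0)
    (hl : lam ≠ 0) (i j : ℕ) (hij : i < j) (u : K[X]) (m : ℕ) (hm : 2 ≤ m)
    (heq : C a * X ^ i + C b * X ^ j = C lam * u ^ m) : False := by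
  obtain ⟨k, rfl⟩ : ∃ k, m = k + 1 := ⟨m - 1, by omega⟩
  have hk : k ≠ 0 := by omega
  have hijK : (i : K) ≠ (j : K) := by exact_mod_cast hij.ne
  have hc : b * ((j : K) - (i : K)) ≠ 0 :=
    mul_ne_zero hb (sub_ne_zero.mpr (Ne.symm hijK))
  have hdvd : u ^ k ∣ C (b * ((j : K) - (i : K))) * X ^ j := by
    have hL : C (b * ((j : K) - (i : K))) * X ^ j
        = X * derivative (C a * X ^ i + C b * X ^ j)
          - C (i : K) * (C a * X ^ i + C b * X ^ j) := by
      simp only [derivative_add, mul_add, aux_X_mul_derivative, C_mul, C_sub]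
      ring
    rw [hL, heq]
    have hd : derivative (C lam * u ^ (k + 1))
        = C lam * (C ((k : K) + 1) * u ^ k * derivative u) := by
      rw [derivative_C_mul, derivative_pow]
      simp only [Nat.add_sub_cancel, Nat.cast_add, Nat.cast_one]
    rw [hd, pow_succ]
    exact ⟨C lam * (X * (C ((k : K) + 1)) * derivative u - C (i : K) * u), by ring⟩
  have hu : u ∣ (X : K[X]) ^ j := by
    have h1 : u ∣ C (b * ((j : K) - (i : K))) * X ^ j := (dvd_pow_self u hk).trans hdvd
    have h2 : (X : K[X]) ^ j
        = C (b * ((j : K) - (i : K)))⁻¹ * (C (b * ((j : K) - (i : K))) * X ^ j) := by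
      rw [← mul_assoc, ← C_mul, inv_mul_cancel₀ hc, C_1, one_mul]
    rw [h2]
    exact h1.mul_left _
  obtain ⟨t, _, v, hv⟩ := (dvd_prime_pow prime_X j).mp hu
  obtain ⟨r, hr, hrv⟩ := isUnit_iff.mp v⁻¹.isUnit
  have hu' : u = C r * X ^ t := by
    have h3 : u = X ^ t * ((v⁻¹ : K[X]ˣ) : K[X]) := by
      rw [← hv, mul_assoc, Units.mul_inv, mul_one]
    rw [h3, ← hrv]
    ring
  have hg : C a * X ^ i + C b * X ^ j = C (lam * r ^ (k + 1)) * X ^ (t * (k + 1)) := by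
    rw [heq, hu', mul_pow, ← C_pow, ← pow_mul, ← mul_assoc, ← C_mul]
  have hco : ∀ n : ℕ, a * (if n = i then (1 : K) else 0) + b * (if n = j then 1 else 0)
      = lam * r ^ (k + 1) * (if n = t * (k + 1) then 1 else 0) := by
    intro n
    have h0 := congrArg (fun p => Polynomial.coeff p n) hg
    simpa only [coeff_add, coeff_C_mul, coeff_X_pow] using h0
  by_cases hi : i = t * (k + 1)
  · by_cases hj : j = t * (k + 1)
    · exact hij.ne (hi.trans hj.symm)
    · have h2 := hco j
      rw [if_neg hij.ne', if_pos rfl, if_neg hj, mul_zero, mul_one, mul_zero, zero_add] at h2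
      exact hb h2
  · have h1 := hco i
    rw [if_pos rfl, if_neg hij.ne, if_neg hi, mul_one, mul_zero, mul_zero, add_zero] at h1
    exact ha h1

lemma aux_exp_inj {N x1 y1 x2 y2 : ℕ} (hy1 : y1 < N) (hy2 : y2 < N)
    (h : N * x1 + y1 = N * x2 + y2) : x1 = x2 ∧ y1 = y2 := by
  have hy : y1 = y2 := by
    have e1 : (N * x1 + y1) % N = y1 := by
      rw [Nat.mul_add_mod, Nat.mod_eq_of_lt hy1]
    have e2 : (N * x2 + y2) % N = y2 := by
      rw [Nat.mul_add_mod, Nat.mod_eq_of_lt hy2]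
    rw [← e1, ← e2, h]
  refine ⟨?_, hy⟩
  have hN : 0 < N := lt_of_le_of_lt (Nat.zero_le _) hy1
  have : N * x1 = N * x2 := by omega
  exact Nat.eq_of_mul_eq_mul_left hN this

end Polynomial

/-- A polynomial `f ∈ K[X,Y]` with exactly two nonzero terms (`|E(f)| = 2`) is not of the
form `λ h^m` with `λ ∈ K^*` and `m ≥ 2`. -/
theorem two_term_not_proper_power {K : Type*} [Field K] [CharZero K]
    (f : MvPolynomial (Fin 2) K) (hf : f.support.card = 2) :
    ¬ ∃ (lam : K) (h : MvPolynomial (Fin 2) K) (m : ℕ),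
        lam ≠ 0 ∧ 2 ≤ m ∧ f = C lam * h ^ m := by
  rintro ⟨lam, p, m, hl, hm, heq⟩
  obtain ⟨e1, e2, hne, hsupp⟩ := Finset.card_eq_two.mp hf
  have ha : coeff e1 f ≠ 0 := by
    rw [← MvPolynomial.mem_support_iff, hsupp]; simp
  have hb : coeff e2 f ≠ 0 := by
    rw [← MvPolynomial.mem_support_iff, hsupp]; simp
  have hf' : f = monomial e1 (coeff e1 f) + monomial e2 (coeff e2 f) := by
    conv_lhs => rw [f.as_sum]
    rw [hsupp, Finset.sum_pair hne]
  set N : ℕ := max (e1 1) (e2 1) + 1 with hN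
  set φ : MvPolynomial (Fin 2) K →ₐ[K] Polynomial K :=
    aeval ![(Polynomial.X : Polynomial K) ^ N, Polynomial.X] with hφ
  have hmono : ∀ (e : Fin 2 →₀ ℕ) (c : K),
      φ (monomial e c) = Polynomial.C c * Polynomial.X ^ (N * e 0 + e 1) := by
    intro e c
    rw [hφ, aeval_monomial, Finsupp.prod_fintype _ _ (fun i => pow_zero _), Fin.prod_univ_two]
    simp only [Matrix.cons_val_zero, Matrix.cons_val_one, Matrix.head_cons]
    rw [← pow_mul, ← pow_add, Polynomial.algebraMap_eq]
  have hd1 : φ f = Polynomial.C (coeff e1 f) * Polynomial.X ^ (N * e1 0 + e1 1)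
      + Polynomial.C (coeff e2 f) * Polynomial.X ^ (N * e2 0 + e2 1) := by
    conv_lhs => rw [hf']
    rw [map_add, hmono, hmono]
  have hd2 : φ f = Polynomial.C lam * (φ p) ^ m := by
    rw [heq, map_mul, map_pow]
    congr 1
    rw [hφ]
    simp [Polynomial.algebraMap_eq]
  have hdne : N * e1 0 + e1 1 ≠ N * e2 0 + e2 1 := by
    intro h
    obtain ⟨hx, hy⟩ := Polynomial.aux_exp_inj (by omega) (by omega) h
    apply hne
    ext i
    have h2 : (i : Fin 2) = 0 ∨ (i : Fin 2) = 1 := by omega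
    rcases h2 with h2 | h2 <;> rw [h2] <;> assumption
  rcases lt_or_gt_of_ne hdne with hlt | hlt
  · exact Polynomial.aux_key (coeff e1 f) (coeff e2 f) lam ha hb hl _ _ hlt (φ p) m hm
      (by rw [← hd1, hd2])
  · exact Polynomial.aux_key (coeff e2 f) (coeff e1 f) lam hb ha hl _ _ hlt (φ p) m hm
      (by rw [add_comm, ← hd1, hd2])
end
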